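/- Let G = (V,E,B) be a directed mixed graph and let P be a partition of its nodes. If a set S ⊆ P of nodes of co(G,P) σ-separates groups Y and Z in co(G,P), then T = ∪_{W∈S} W σ-separates every pair of micro-nodes y ∈ Y, z ∈ Z in G. -/

import Mathlib

/-! ## Mixed graphs -/

/-- A mixed graph: directed, bidirected and undirected edges, no self-edges. -/
structure MixedGraph (V : Type) where
  dir : V → V → Prop
  bidir : V → V → Prop
  undir : V → V → Prop
  bidir_symm : ∀ {a b}, bidir a b → bidir b a
  undir_symm : ∀ {a b}, undir a b → undir b a
  dir_irrefl : ∀ a, ¬ dir a a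
  bidir_irrefl : ∀ a, ¬ bidir a a
  undir_irrefl : ∀ a, ¬ undir a a

namespace MixedGraph

variable {V I : Type}

/-- A directed mixed graph is a mixed graph without undirected edges. -/
def IsDMG (G : MixedGraph V) : Prop := ∀ a b, ¬ G.undir a b

/-- `a` and `b` lie in the same strongly connected component: there are directed
paths between them in both directions. -/
def Strongly (G : MixedGraph V) (a b : V) : Prop :=
  Relation.ReflTransGen G.dir a b ∧ Relation.ReflTransGen G.dir b a

lemma Strongly.refl (G : MixedGraph V) (a : V) : G.Strongly a a :=
  ⟨Relation.ReflTransGen.refl, Relation.ReflTransGen.refl⟩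

lemma Strongly.symm {G : MixedGraph V} {a b : V} (h : G.Strongly a b) : G.Strongly b a :=
  ⟨h.2, h.1⟩

/-- A graph is acyclic if it has no nontrivial directed closed walk. -/
def Acyclic (G : MixedGraph V) : Prop := ∀ a, ¬ Relation.TransGen G.dir a a

end MixedGraph

/-! ## Walks -/

/-- The four ways in which an edge can occur on a walk, as traversed from its
first node `a` to its second node `b`: `fw` is `a → b`, `bw` is `a ← b`,
`bi` is `a ↔ b` and `un` is `a − b`. -/
inductive StepKind | fw | bw | bi | un
deriving DecidableEq

/-- A step of a walk: an ordered pair of nodes together with the kind of edge. -/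
structure Step (V : Type) where
  a : V
  b : V
  k : StepKind

/-- The step is an actual edge of the graph `G`. -/
def Step.ok {V : Type} (G : MixedGraph V) (s : Step V) : Prop :=
  match s.k with
  | .fw => G.dir s.a s.b
  | .bw => G.dir s.b s.a
  | .bi => G.bidir s.a s.b
  | .un => G.undir s.a s.b

/-- The edge of the step has an arrowhead at its first node. -/
def Step.headA {V : Type} (s : Step V) : Prop := s.k = .bw ∨ s.k = .bi

/-- The edge of the step has an arrowhead at its second node. -/
def Step.headB {V : Type} (s : Step V) : Prop := s.k = .fw ∨ s.k = .bi

namespace MixedGraph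

variable {V I : Type}

/-- `IsWalk G x y L`: the list of steps `L` forms a walk from `x` to `y` in `G`. -/
inductive IsWalk (G : MixedGraph V) : V → V → List (Step V) → Prop
  | nil (a : V) : IsWalk G a a []
  | cons {c : V} (s : Step V) (L : List (Step V)) (hok : s.ok G)
      (hw : IsWalk G s.b c L) : IsWalk G s.a c (s :: L)

/-- `v` is a collider at junction `i` of the walk `L`: both edges adjacent to the
inner node `v` point into `v`. -/
def ColliderAt (L : List (Step V)) (i : ℕ) (v : V) : Prop :=
  ∃ s t, L[i]? = some s ∧ L[i+1]? = some t ∧ s.b = v ∧ t.a = v ∧ s.headB ∧ t.headA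

/-- `v` is a non-collider at junction `i` of the walk `L`. -/
def NonColliderAt (L : List (Step V)) (i : ℕ) (v : V) : Prop :=
  ∃ s t, L[i]? = some s ∧ L[i+1]? = some t ∧ s.b = v ∧ t.a = v ∧ ¬ (s.headB ∧ t.headA)

/-- The walk `L` from `x` to `y` is m-blocked by the node set `S`. -/
def MBlockedWalk (G : MixedGraph V) (S : Set V) (x y : V) (L : List (Step V)) : Prop :=
  x ∈ S ∨ y ∈ S ∨
  (∃ i v, ColliderAt L i v ∧ ∀ d, Relation.ReflTransGen G.dir v d → d ∉ S) ∨
  (∃ i v, NonColliderAt L i v ∧ v ∈ S)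

/-- The walk `L` from `x` to `y` is σ-blocked by the node set `S`. -/
def SigmaBlockedWalk (G : MixedGraph V) (S : Set V) (x y : V) (L : List (Step V)) : Prop :=
  x ∈ S ∨ y ∈ S ∨
  (∃ i v, ColliderAt L i v ∧ ∀ d, Relation.ReflTransGen G.dir v d → d ∉ S) ∨
  (∃ i s t, L[i]? = some s ∧ L[i+1]? = some t ∧ s.b = t.a ∧ ¬ (s.headB ∧ t.headA) ∧
    s.b ∈ S ∧
    (((s.k = .bw ∨ s.k = .un) ∧ ¬ G.Strongly s.b s.a) ∨
     ((t.k = .fw ∨ t.k = .un) ∧ ¬ G.Strongly t.a t.b)))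

/-- `x` and `y` are m-separated by `S` in `G`. -/
def MSep (G : MixedGraph V) (S : Set V) (x y : V) : Prop :=
  ∀ L, G.IsWalk x y L → G.MBlockedWalk S x y L

/-- `x` and `y` are σ-separated by `S` in `G`. -/
def SigmaSep (G : MixedGraph V) (S : Set V) (x y : V) : Prop :=
  ∀ L, G.IsWalk x y L → G.SigmaBlockedWalk S x y L

/-! ## Acyclification -/

/-- The acyclification of a mixed graph. -/
def acy (G : MixedGraph V) : MixedGraph V where
  dir a b := (∃ c, G.dir a c ∧ G.Strongly c b) ∧ ¬ G.Strongly a b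
  bidir a b := a ≠ b ∧ (G.Strongly a b ∨
    ∃ a' b', G.Strongly a a' ∧ G.Strongly b b' ∧ G.bidir a' b')
  undir a b := ¬ G.Strongly a b ∧ G.undir a b
  bidir_symm := by
    rintro a b ⟨hab, h | ⟨a', b', ha, hb, h⟩⟩
    · exact ⟨hab.symm, Or.inl h.symm⟩
    · exact ⟨hab.symm, Or.inr ⟨b', a', hb, ha, G.bidir_symm h⟩⟩
  undir_symm := by
    rintro a b ⟨h1, h2⟩
    exact ⟨fun h => h1 h.symm, G.undir_symm h2⟩
  dir_irrefl := fun a h => h.2 (Strongly.refl G a)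
  bidir_irrefl := fun a h => h.1 rfl
  undir_irrefl := fun a h => h.1 (Strongly.refl G a)

/-! ## Coarse graphs -/

/-- The coarse (quotient) graph of `G` with respect to the partition given by the
quotient map `q` onto the set of groups `I`. -/
def coarse (G : MixedGraph V) (q : V → I) : MixedGraph I where
  dir Y Z := Y ≠ Z ∧ ∃ y z, q y = Y ∧ q z = Z ∧ G.dir y z
  bidir Y Z := Y ≠ Z ∧ ∃ y z, q y = Y ∧ q z = Z ∧ G.bidir y z
  undir Y Z := Y ≠ Z ∧ ∃ y z, q y = Y ∧ q z = Z ∧ G.undir y z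
  bidir_symm := by
    rintro Y Z ⟨hne, y, z, hy, hz, h⟩
    exact ⟨hne.symm, z, y, hz, hy, G.bidir_symm h⟩
  undir_symm := by
    rintro Y Z ⟨hne, y, z, hy, hz, h⟩
    exact ⟨hne.symm, z, y, hz, hy, G.undir_symm h⟩
  dir_irrefl := fun Y h => h.1 rfl
  bidir_irrefl := fun Y h => h.1 rfl
  undir_irrefl := fun Y h => h.1 rfl

end MixedGraph

/-!
Contract a micro walk by deleting its steps inside a group: what is left is a coarse walk from
`Y` to `Z`, which `S` blocks. A blocking coarse non-collider is the end of a micro edge that leaves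
the group of that end, and also its strongly connected component, since strong connection
projects to the coarse graph. At a blocking coarse collider `W`, the micro subwalk from the
arrowhead into `W` to the arrowhead out of `W` stays inside `W`; having no undirected edges it
contains a micro collider in `W`, and all its descendants lie in groups descending from `W`.
-/

namespace List

variable {α : Type}

theorem pair_infix_iff_getElem? {a b : α} {l : List α} :
    [a, b] <:+: l ↔ ∃ i, l[i]? = some a ∧ l[i + 1]? = some b := by
  rw [infix_iff_getElem?]
  constructor
  · rintro ⟨k, -, h⟩
    exact ⟨k, by simpa using h 0 (by simp), by simpa [Nat.add_comm] using h 1 (by simp)⟩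
  · rintro ⟨k, ha, hb⟩
    refine ⟨k, ?_, fun i hi => ?_⟩
    · have := (getElem?_eq_some_iff.1 hb).1
      simp only [length_cons, length_nil]
      omega
    · simp only [length_cons, length_nil] at hi
      interval_cases i
      · simpa using ha
      · simpa [Nat.add_comm] using hb

theorem exists_infix_of_pair_infix_filter {p : α → Bool} {a b : α} {l : List α}
    (h : [a, b] <:+: l.filter p) : ∃ m, a :: m ++ [b] <:+: l ∧ ∀ x ∈ m, ¬ p x := by
  obtain ⟨l', hl', he⟩ := infix_filter_iff.1 h
  obtain ⟨l₁, l₂, rfl, -, -, he⟩ := filter_eq_cons_iff.1 he.symm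
  obtain ⟨m, l₃, rfl, hm, -, -⟩ := filter_eq_cons_iff.1 he
  exact ⟨m, IsInfix.trans ⟨l₁, l₃, by simp⟩ hl', hm⟩

theorem exists_pair_infix_of_head (a b : α) (m : List α) : ∃ c, [a, c] <:+: a :: m ++ [b] := by
  cases m with
  | nil => exact ⟨b, infix_refl _⟩
  | cons c m => exact ⟨c, [], m ++ [b], rfl⟩

theorem exists_pair_infix_of_last (a b : α) (m : List α) : ∃ c, [c, b] <:+: a :: m ++ [b] := by
  rcases eq_nil_or_concat m with rfl | ⟨m, c, rfl⟩
  · exact ⟨a, infix_refl _⟩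
  · exact ⟨c, a :: m, [], by simp⟩

end List

def Step.map {V I : Type} (q : V → I) (s : Step V) : Step I := ⟨q s.a, q s.b, s.k⟩

theorem Step.not_headB {V : Type} {s : Step V} (h : s.k = .bw ∨ s.k = .un) : ¬ s.headB := by
  rcases h with h | h <;> simp [Step.headB, h]

theorem Step.not_headA {V : Type} {s : Step V} (h : s.k = .fw ∨ s.k = .un) : ¬ s.headA := by
  rcases h with h | h <;> simp [Step.headA, h]

namespace MixedGraph

variable {V I : Type}

def contract [DecidableEq I] (q : V → I) (L : List (Step V)) : List (Step I) :=
  (L.filter fun s => q s.a ≠ q s.b).map (Step.map q)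

def IsBlockingCollider (G : MixedGraph V) (S : Set V) (s t : Step V) : Prop :=
  s.b = t.a ∧ s.headB ∧ t.headA ∧ ∀ d, Relation.ReflTransGen G.dir s.b d → d ∉ S

def IsBlockingNonCollider (G : MixedGraph V) (S : Set V) (s t : Step V) : Prop :=
  s.b = t.a ∧ ¬ (s.headB ∧ t.headA) ∧ s.b ∈ S ∧
    (((s.k = .bw ∨ s.k = .un) ∧ ¬ G.Strongly s.b s.a) ∨
     ((t.k = .fw ∨ t.k = .un) ∧ ¬ G.Strongly t.a t.b))

theorem sigmaBlockedWalk_iff {G : MixedGraph V} {S : Set V} {x y : V} {L : List (Step V)} :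
    G.SigmaBlockedWalk S x y L ↔ x ∈ S ∨ y ∈ S ∨
      ∃ s t, [s, t] <:+: L ∧ (G.IsBlockingCollider S s t ∨ G.IsBlockingNonCollider S s t) := by
  simp only [SigmaBlockedWalk, ColliderAt, IsBlockingCollider, IsBlockingNonCollider,
    List.pair_infix_iff_getElem?]
  constructor
  · rintro (hx | hy | ⟨i, v, ⟨s, t, hs, ht, rfl, htv, hsB, htA⟩, hd⟩ | ⟨i, s, t, hs, ht, h⟩)
    · exact .inl hx
    · exact .inr (.inl hy)
    · exact .inr (.inr ⟨s, t, ⟨i, hs, ht⟩, .inl ⟨htv.symm, hsB, htA, hd⟩⟩)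
    · exact .inr (.inr ⟨s, t, ⟨i, hs, ht⟩, .inr h⟩)
  · rintro (hx | hy | ⟨s, t, ⟨i, hs, ht⟩, ⟨hst, hsB, htA, hd⟩ | h⟩)
    · exact .inl hx
    · exact .inr (.inl hy)
    · exact .inr (.inr (.inl ⟨i, s.b, ⟨s, t, hs, ht, rfl, hst.symm, hsB, htA⟩, hd⟩))
    · exact .inr (.inr (.inr ⟨i, s, t, hs, ht, h⟩))

theorem IsWalk.head_a {G : MixedGraph V} {x y : V} {s : Step V} {L : List (Step V)}
    (h : G.IsWalk x y (s :: L)) : s.a = x := by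
  cases h
  rfl

theorem IsWalk.isChain {G : MixedGraph V} {x y : V} {L : List (Step V)} (h : G.IsWalk x y L) :
    L.IsChain fun s t => s.b = t.a := by
  induction h with
  | nil => exact .nil
  | cons s L _ hw ih =>
    cases L with
    | nil => exact .singleton s
    | cons t L' => exact .cons_cons hw.head_a.symm ih

theorem IsWalk.b_eq_a_of_pair_infix {G : MixedGraph V} {x y : V} {L : List (Step V)}
    (h : G.IsWalk x y L) {s t : Step V} (hst : [s, t] <:+: L) : s.b = t.a :=
  (List.isChain_pair (R := fun s t : Step V => s.b = t.a)).1 (h.isChain.infix hst)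

theorem IsWalk.ok_of_mem {G : MixedGraph V} {x y : V} {L : List (Step V)}
    (h : G.IsWalk x y L) {s : Step V} (hs : s ∈ L) : s.ok G := by
  induction h with
  | nil => simp at hs
  | cons t L hok _ ih =>
    rcases List.mem_cons.1 hs with rfl | hs
    · exact hok
    · exact ih hs

theorem IsDMG.k_ne_un {G : MixedGraph V} (hG : G.IsDMG) {s : Step V} (hs : s.ok G) :
    s.k ≠ .un := by
  intro hk
  exact hG s.a s.b (by simpa [Step.ok, hk] using hs)

theorem Step.ok.map {G : MixedGraph V} {s : Step V} (hs : s.ok G) (q : V → I)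
    (hq : q s.a ≠ q s.b) : (s.map q).ok (G.coarse q) := by
  cases hk : s.k <;> simp only [Step.ok, Step.map, hk] at hs ⊢
  · exact ⟨hq, s.a, s.b, rfl, rfl, hs⟩
  · exact ⟨Ne.symm hq, s.b, s.a, rfl, rfl, hs⟩
  · exact ⟨hq, s.a, s.b, rfl, rfl, hs⟩
  · exact ⟨hq, s.a, s.b, rfl, rfl, hs⟩

theorem IsWalk.coarse_contract [DecidableEq I] {G : MixedGraph V} {x y : V} {L : List (Step V)}
    (h : G.IsWalk x y L) (q : V → I) : (G.coarse q).IsWalk (q x) (q y) (contract q L) := by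
  induction h with
  | nil => exact .nil _
  | cons s L hok _ ih =>
    by_cases hq : q s.a = q s.b
    · simpa [MixedGraph.contract, hq] using ih
    · rw [show contract q (s :: L) = s.map q :: contract q L by simp [MixedGraph.contract, hq]]
      exact .cons _ _ (Step.ok.map hok q hq) ih

theorem reflTransGen_coarse_dir {G : MixedGraph V} (q : V → I) {a b : V}
    (h : Relation.ReflTransGen G.dir a b) : Relation.ReflTransGen (G.coarse q).dir (q a) (q b) :=
  h.lift' q fun a b hab => by
    by_cases hq : q a = q b
    · exact show Relation.ReflTransGen _ (q a) (q b) from hq ▸ .refl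
    · exact .single ⟨hq, a, b, rfl, rfl, hab⟩

theorem Strongly.coarse {G : MixedGraph V} (q : V → I) {a b : V} (h : G.Strongly a b) :
    (G.coarse q).Strongly (q a) (q b) :=
  ⟨reflTransGen_coarse_dir q h.1, reflTransGen_coarse_dir q h.2⟩

theorem exists_infix_of_pair_infix_contract [DecidableEq I] {q : V → I} {L : List (Step V)}
    {σ τ : Step I} (h : [σ, τ] <:+: contract q L) :
    ∃ s M t, s :: M ++ [t] <:+: L ∧ s.map q = σ ∧ t.map q = τ ∧ ∀ e ∈ M, q e.a = q e.b := by
  obtain ⟨l, hl, hστ⟩ := List.infix_map_iff.1 h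
  obtain ⟨s, t, rfl, rfl, rfl⟩ : ∃ s t, l = [s, t] ∧ s.map q = σ ∧ t.map q = τ := by
    match l, hστ with
    | [s, t], hστ => simp_all [eq_comm]
  obtain ⟨M, hM, hint⟩ := List.exists_infix_of_pair_infix_filter hl
  exact ⟨s, M, t, hM, rfl, rfl, fun e he => by simpa using hint e he⟩

theorem exists_collider_of_headB_of_headA (q : V → I) {t : Step V} :
    ∀ {s : Step V} {M : List (Step V)}, s.headB → t.headA →
      (∀ e ∈ M, e.k ≠ .un ∧ q e.a = q e.b) →
      (s :: M ++ [t]).IsChain (fun u w => u.b = w.a) →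
      ∃ u w, [u, w] <:+: s :: M ++ [t] ∧ u.headB ∧ w.headA ∧ q u.b = q s.b
  | s, [], hs, ht, _, _ => ⟨s, t, List.infix_refl _, hs, ht, rfl⟩
  | s, e :: M, hs, ht, hM, hc => by
    by_cases he : e.headA
    · exact ⟨s, e, ⟨[], M ++ [t], rfl⟩, hs, he, rfl⟩
    have heB : e.headB := by
      have := (hM e (.head _)).1
      cases hk : e.k <;> simp_all [Step.headA, Step.headB]
    obtain ⟨hse, hc⟩ := List.isChain_cons_cons.1 hc
    obtain ⟨u, w, huw, hu, hw, hqu⟩ :=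
      exists_collider_of_headB_of_headA q heB ht (fun e' he' => hM e' (.tail _ he')) hc
    refine ⟨u, w, huw.trans (List.suffix_cons _ _).isInfix, hu, hw, ?_⟩
    rw [hqu, ← (hM e (.head _)).2, ← hse]

variable [DecidableEq I] {G : MixedGraph V} {q : V → I} {x y : V} {L : List (Step V)}
  {S : Set I} {σ τ : Step I}

theorem IsWalk.exists_blockingCollider_of_contract (hG : G.IsDMG) (hL : G.IsWalk x y L)
    (hστ : [σ, τ] <:+: contract q L) (h : (G.coarse q).IsBlockingCollider S σ τ) :
    ∃ u w, [u, w] <:+: L ∧ G.IsBlockingCollider (q ⁻¹' S) u w := by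
  obtain ⟨s, M, t, hinf, rfl, rfl, hM⟩ := exists_infix_of_pair_infix_contract hστ
  obtain ⟨-, hs, ht, hdesc⟩ := h
  have hc := hL.isChain.infix hinf
  obtain ⟨u, w, huw, hu, hw, hqu⟩ := exists_collider_of_headB_of_headA q hs ht
    (fun e he => ⟨hG.k_ne_un (hL.ok_of_mem (hinf.subset (by simp [he]))), hM e he⟩) hc
  refine ⟨u, w, huw.trans hinf, hL.b_eq_a_of_pair_infix (huw.trans hinf), hu, hw,
    fun d hd hdS => hdesc (q d) ?_ hdS⟩
  simpa only [Step.map, hqu] using reflTransGen_coarse_dir q hd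

theorem IsWalk.exists_blockingNonCollider_of_contract (hL : G.IsWalk x y L)
    (hστ : [σ, τ] <:+: contract q L) (h : (G.coarse q).IsBlockingNonCollider S σ τ) :
    ∃ u w, [u, w] <:+: L ∧ G.IsBlockingNonCollider (q ⁻¹' S) u w := by
  obtain ⟨s, M, t, hinf, rfl, rfl, -⟩ := exists_infix_of_pair_infix_contract hστ
  obtain ⟨hst, -, hS, ⟨hk, hout⟩ | ⟨hk, hout⟩⟩ := h
  · obtain ⟨w, hsw⟩ := List.exists_pair_infix_of_head s t M
    exact ⟨s, w, hsw.trans hinf, hL.b_eq_a_of_pair_infix (hsw.trans hinf),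
      fun hB => Step.not_headB hk hB.1, hS, .inl ⟨hk, fun h => hout (h.coarse q)⟩⟩
  · obtain ⟨u, hut⟩ := List.exists_pair_infix_of_last s t M
    have hu : u.b = t.a := hL.b_eq_a_of_pair_infix (hut.trans hinf)
    have huS : q u.b ∈ S := by rwa [hu, ← show q s.b = q t.a from hst]
    exact ⟨u, t, hut.trans hinf, hu, fun hA => Step.not_headA hk hA.2, huS,
      .inr ⟨hk, fun h => hout (h.coarse q)⟩⟩

end MixedGraph

open MixedGraph in
theorem sigmaSep_of_coarse_sigmaSep_general {V I : Type} (G : MixedGraph V)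
    (hDMG : G.IsDMG) (q : V → I)
    (Y Z : I) (S : Set I) (hsep : (G.coarse q).SigmaSep S Y Z) :
    ∀ y z, q y = Y → q z = Z → G.SigmaSep (q ⁻¹' S) y z := by
  classical
  rintro y z rfl rfl L hL
  have hblocked := hsep _ (hL.coarse_contract q)
  rw [sigmaBlockedWalk_iff] at hblocked ⊢
  rcases hblocked with hy | hz | ⟨σ, τ, hστ, hcol | hnoncol⟩
  · exact .inl hy
  · exact .inr (.inl hz)
  · obtain ⟨u, w, huw, h⟩ := hL.exists_blockingCollider_of_contract hDMG hστ hcol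
    exact .inr (.inr ⟨u, w, huw, .inl h⟩)
  · obtain ⟨u, w, huw, h⟩ := hL.exists_blockingNonCollider_of_contract hστ hnoncol
    exact .inr (.inr ⟨u, w, huw, .inr h⟩)

open MixedGraph in
/-- Let `G` be a directed mixed graph and `q` the quotient map of a
partition of its nodes. If a set `S` of groups σ-separates the groups `Y` and `Z`
in the coarse graph, then the union `T = q ⁻¹' S` of the groups in `S` σ-separates
every pair of micro-nodes `y ∈ Y`, `z ∈ Z` in `G`. -/
theorem sigmaSep_of_coarse_sigmaSep {V I : Type} (G : MixedGraph V)
    (hDMG : G.IsDMG) (q : V → I) (hq : Function.Surjective q)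
    (Y Z : I) (S : Set I) (hsep : (G.coarse q).SigmaSep S Y Z) :
    ∀ y z, q y = Y → q z = Z → G.SigmaSep (q ⁻¹' S) y z :=
  sigmaSep_of_coarse_sigmaSep_general G hDMG q Y Z S hsep
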